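/- Let 0 < α < β ≤ 1. Then the function φ : ℝ → ℝ defined by φ(t) = 1 − (α/β)·A_β(e^{2t}, 1)/A_α(e^{2t}, 1) for t ≠ 0 and φ(0) = (β − α)/β is positive definite. (Explicitly, φ(t) = sinh((β − α)t)/(cosh(αt)·sinh(βt)) for t ≠ 0.) -/

import Mathlib

/-!
The function is `(β - α)/β · sinhc ((β - α) t) / sinhc (β t) · (cosh (α t))⁻¹`. Euler's product
for `sinh` turns the quotient of the `sinhc`'s into a limit of products of factors
`r + (1 - r) (1 + (β t / π k)²)⁻¹` with `r = ((β - α) / β)² ∈ [0, 1]`, and `(cosh (α t))⁻¹` into a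
limit of products of `(1 + (2 α t / π (2k + 1))²)⁻¹`. The Cauchy kernel `(1 + (a t)²)⁻¹` is
positive definite, being the Schur product of the Cauchy matrix `(zᵢ + z̄ⱼ)⁻¹`, `zᵢ = 1/2 + i a tᵢ`,
with its transpose, and positive definite kernels are closed under sums, nonnegative multiples,
Schur products and pointwise limits.
-/

open scoped ComplexOrder

/-- Logarithmic mean. -/
noncomputable def LM (x y : ℝ) : ℝ :=
  if x = y then x else (x - y) / (Real.log x - Real.log y)

/-- The mean `A_α`, with `A_0 = LM`. -/
noncomputable def Amean (α x y : ℝ) : ℝ :=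
  if x = y then x else if α = 0 then LM x y
  else α * (x ^ α + y ^ α) * (x - y) / (2 * (x ^ α - y ^ α))

/-- The mean `G_α`, with `G_0 = LM`. -/
noncomputable def Gmean (α x y : ℝ) : ℝ :=
  if x = y then x else if α = 0 then LM x y
  else α * (x * y) ^ (α / 2) * (x - y) / (x ^ α - y ^ α)

/-- The mean `H_α`, with `H_0 = LM`. -/
noncomputable def Hmean (α x y : ℝ) : ℝ :=
  if x = y then x else if α = 0 then LM x y
  else 2 * α * (x * y) ^ α * (x - y) / ((x ^ α + y ^ α) * (x ^ α - y ^ α))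

/-- The power difference mean `M_α`. -/
noncomputable def Mmean (α x y : ℝ) : ℝ :=
  if x = y then x
  else ((α - 1) / α) * (x ^ α - y ^ α) / (x ^ (α - 1) - y ^ (α - 1))

/-- A continuous real function `φ` is positive definite if every matrix
`[φ(tᵢ - tⱼ)]` is positive semidefinite (as a complex matrix). -/
def IsPosDefFun (φ : ℝ → ℝ) : Prop :=
  Continuous φ ∧ ∀ (n : ℕ) (t : Fin n → ℝ),
    Matrix.PosSemidef (Matrix.of fun i j : Fin n => (φ (t i - t j) : ℂ))

open Filter Topology Real

theorem Complex.norm_sub_one_lt_norm_add_one {z : ℂ} (hz : 0 < z.re) : ‖z - 1‖ < ‖z + 1‖ := by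
  rw [← sq_lt_sq₀ (norm_nonneg _) (norm_nonneg _), Complex.sq_norm, Complex.sq_norm,
    Complex.normSq_apply, Complex.normSq_apply]
  simp only [Complex.sub_re, Complex.add_re, Complex.one_re, Complex.sub_im, Complex.add_im,
    Complex.one_im]
  nlinarith

namespace Matrix

variable {𝕜 ι : Type*} [RCLike 𝕜] [Fintype ι]

theorem isClosed_setOf_posSemidef : IsClosed {A : Matrix ι ι 𝕜 | A.PosSemidef} := by
  simp only [posSemidef_iff_dotProduct_mulVec, Set.ofPred_and, Set.ofPred_forall]
  refine .inter (isClosed_eq (by fun_prop) continuous_id) (isClosed_iInter fun x => ?_)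
  exact isClosed_le continuous_const (by fun_prop)

theorem posSemidef_of_hasSum {κ : Type*} {A : κ → Matrix ι ι 𝕜} {M : Matrix ι ι 𝕜}
    (hA : ∀ k, (A k).PosSemidef) (hM : HasSum A M) : M.PosSemidef :=
  isClosed_setOf_posSemidef.mem_of_tendsto hM
    (Eventually.of_forall fun s => posSemidef_sum s fun k _ => hA k)

theorem posSemidef_cauchy (z : ι → ℂ) (hz : ∀ i, 0 < (z i).re) :
    (of fun i j => (z i + star (z j))⁻¹).PosSemidef := by
  have hne : ∀ {ζ ξ : ℂ}, 0 < ζ.re → 0 < ξ.re → ζ + ξ ≠ 0 := fun hζ hξ h => by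
    have := congrArg Complex.re h
    simp only [Complex.add_re, Complex.zero_re] at this
    linarith
  have hstar : ∀ j, 0 < (star (z j)).re := fun j => by simpa using hz j
  have hone : (0 : ℝ) < (1 : ℂ).re := by simp
  -- `w` is the Cayley transform of `z`, which lies in the unit disc
  let w : ι → ℂ := fun i => (z i - 1) / (z i + 1)
  have hw : ∀ i, ‖w i‖ < 1 := fun i => by
    rw [norm_div, div_lt_one (norm_pos_iff.2 (hne (hz i) hone))]
    exact Complex.norm_sub_one_lt_norm_add_one (hz i)
  let v : ℕ → ι → ℂ := fun k i => (z i + 1)⁻¹ * w i ^ k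
  refine posSemidef_of_hasSum (A := fun k => (2 : ℂ) • vecMulVec (v k) (star (v k)))
    (fun k => (posSemidef_vecMulVec_self_star _).smul (by norm_num)) ?_
  refine Pi.hasSum.2 fun i => Pi.hasSum.2 fun j => ?_
  have hr : ‖w i * star (w j)‖ < 1 := by
    rw [norm_mul, norm_star]
    nlinarith [hw i, hw j, norm_nonneg (w i), norm_nonneg (w j)]
  have hgeom := (hasSum_geometric_of_norm_lt_one hr).mul_left
    (2 * (z i + 1)⁻¹ * (star (z j) + 1)⁻¹)
  have hcayley : ∀ {ζ ξ : ℂ}, ζ + 1 ≠ 0 → ξ + 1 ≠ 0 → ζ + ξ ≠ 0 →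
      (ζ + ξ)⁻¹ = 2 * (ζ + 1)⁻¹ * (ξ + 1)⁻¹ * (1 - (ζ - 1) / (ζ + 1) * ((ξ - 1) / (ξ + 1)))⁻¹ := by
    intro ζ ξ h1 h2 h3
    have hden : 1 - (ζ - 1) / (ζ + 1) * ((ξ - 1) / (ξ + 1))
        = 2 * (ζ + ξ) / ((ζ + 1) * (ξ + 1)) := by
      field_simp
      ring
    rw [hden]
    field_simp
  have hval : (of fun i j => (z i + star (z j))⁻¹) i j
      = 2 * (z i + 1)⁻¹ * (star (z j) + 1)⁻¹ * (1 - w i * star (w j))⁻¹ := by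
    simpa [w] using hcayley (hne (hz i) hone) (hne (hstar j) hone) (hne (hz i) (hstar j))
  rw [hval]
  refine hgeom.congr_fun fun k => ?_
  simp only [smul_apply, vecMulVec_apply, Pi.star_apply, v, star_mul', star_pow, star_inv₀,
    star_add, star_one, smul_eq_mul, mul_pow]
  ring

end Matrix

def IsPosDefKernel (f : ℝ → ℝ) : Prop :=
  ∀ (n : ℕ) (t : Fin n → ℝ), (Matrix.of fun i j : Fin n => (f (t i - t j) : ℂ)).PosSemidef

namespace IsPosDefKernel

open Matrix

theorem const {r : ℝ} (hr : 0 ≤ r) : IsPosDefKernel fun _ => r := by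
  intro n t
  convert (posSemidef_vecMulVec_self_star (1 : Fin n → ℂ)).smul (Complex.zero_le_real.2 hr)
    using 1
  ext i j
  simp

theorem add {f g : ℝ → ℝ} (hf : IsPosDefKernel f) (hg : IsPosDefKernel g) :
    IsPosDefKernel fun t => f t + g t := by
  intro n t
  convert (hf n t).add (hg n t) using 1
  ext i j
  simp

theorem const_mul {f : ℝ → ℝ} (hf : IsPosDefKernel f) {r : ℝ} (hr : 0 ≤ r) :
    IsPosDefKernel fun t => r * f t := by
  intro n t
  convert (hf n t).smul (Complex.zero_le_real.2 hr) using 1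
  ext i j
  simp

theorem mul {f g : ℝ → ℝ} (hf : IsPosDefKernel f) (hg : IsPosDefKernel g) :
    IsPosDefKernel fun t => f t * g t := by
  intro n t
  have hfg : (of fun i j => ((f (t i - t j) * g (t i - t j) : ℝ) : ℂ))
      = (of fun i j => (f (t i - t j) : ℂ)) ⊙ of fun i j => (g (t i - t j) : ℂ) := by
    ext i j
    simp
  rw [hfg]
  exact (hf n t).hadamard (hg n t)

theorem prod {ι : Type*} (s : Finset ι) {f : ι → ℝ → ℝ} (hf : ∀ k ∈ s, IsPosDefKernel (f k)) :
    IsPosDefKernel fun t => ∏ k ∈ s, f k t := by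
  classical
  induction s using Finset.induction_on with
  | empty => simpa using const zero_le_one
  | insert k s hk ih =>
    simp only [Finset.prod_insert hk]
    exact (hf k (s.mem_insert_self k)).mul (ih fun l hl => hf l (Finset.mem_insert_of_mem hl))

theorem of_tendsto {ι : Type*} {l : Filter ι} [l.NeBot] {F : ι → ℝ → ℝ} {f : ℝ → ℝ}
    (hF : ∀ N, IsPosDefKernel (F N)) (hlim : ∀ t, Tendsto (fun N => F N t) l (𝓝 (f t))) :
    IsPosDefKernel f := by
  intro n t
  have hmem : (of fun i j : Fin n => (f (t i - t j) : ℂ)) ∈ {A | A.PosSemidef} := by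
    refine isClosed_setOf_posSemidef.mem_of_tendsto (b := l) ?_ (.of_forall fun N => hF N n t)
    refine tendsto_pi_nhds.2 fun i => tendsto_pi_nhds.2 fun j => ?_
    exact (Complex.continuous_ofReal.tendsto _).comp (hlim _)
  exact hmem

end IsPosDefKernel

open Matrix in
theorem isPosDefKernel_inv_one_add_sq (a : ℝ) : IsPosDefKernel fun t => (1 + (a * t) ^ 2)⁻¹ := by
  intro n t
  have hM := posSemidef_cauchy (fun i => 1 / 2 + a * t i * Complex.I) (by simp)
  have hM2 : (of fun i j : Fin n => (((1 + (a * (t i - t j)) ^ 2)⁻¹ : ℝ) : ℂ))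
      = (of fun i j => (1 / 2 + a * t i * Complex.I + star (1 / 2 + a * t j * Complex.I))⁻¹)
        ⊙ (of fun i j =>
          (1 / 2 + a * t i * Complex.I + star (1 / 2 + a * t j * Complex.I))⁻¹)ᵀ := by
    ext i j
    simp only [of_apply, hadamard_apply, transpose_apply, Complex.star_def, map_add, map_mul,
      map_div₀, map_one, map_ofNat, Complex.conj_ofReal, Complex.conj_I]
    rw [← mul_inv]
    push_cast
    congr 1
    linear_combination ((a : ℂ) ^ 2 * (t i - t j) ^ 2) * Complex.I_sq
  rw [hM2]
  exact hM.hadamard hM.transpose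

noncomputable def sinhc (x : ℝ) : ℝ := if x = 0 then 1 else sinh x / x

theorem sinhc_zero : sinhc 0 = 1 := if_pos rfl

theorem sinhc_of_ne_zero {x : ℝ} (hx : x ≠ 0) : sinhc x = sinh x / x := if_neg hx

theorem sinhc_eq_dslope : sinhc = dslope sinh 0 := by
  ext x
  rcases eq_or_ne x 0 with rfl | hx
  · simp [sinhc_zero]
  · simp [sinhc_of_ne_zero hx, dslope_of_ne _ hx, slope_def_field, div_eq_inv_mul]

theorem continuous_sinhc : Continuous sinhc := by
  refine continuous_iff_continuousAt.2 fun x => ?_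
  rw [sinhc_eq_dslope]
  rcases eq_or_ne x 0 with rfl | hx
  · exact continuousAt_dslope_same.2 (differentiable_sinh 0)
  · exact (continuousAt_dslope_of_ne hx).2 continuous_sinh.continuousAt

theorem sinhc_pos (x : ℝ) : 0 < sinhc x := by
  rcases lt_trichotomy x 0 with hx | rfl | hx
  · rw [sinhc_of_ne_zero hx.ne]
    exact div_pos_of_neg_of_neg (sinh_neg_iff.2 hx) hx
  · simp [sinhc_zero]
  · rw [sinhc_of_ne_zero hx.ne']
    exact div_pos (sinh_pos_iff.2 hx) hx

theorem sinhc_two_mul (x : ℝ) : sinhc (2 * x) = sinhc x * cosh x := by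
  rcases eq_or_ne x 0 with rfl | hx
  · simp [sinhc_zero]
  · rw [sinhc_of_ne_zero hx, sinhc_of_ne_zero (mul_ne_zero two_ne_zero hx), sinh_two_mul]
    field_simp

theorem tendsto_prod_sinhc (x : ℝ) :
    Tendsto (fun N => ∏ k ∈ Finset.range N, (1 + (x / (π * (k + 1))) ^ 2)) atTop
      (𝓝 (sinhc x)) := by
  rcases eq_or_ne x 0 with rfl | hx
  · simp [sinhc_zero]
  have hz : (x : ℂ) * Complex.I / π ≠ 0 := by simp [hx, Real.pi_ne_zero]
  have hprod : ∀ N, ∏ k ∈ Finset.range N, (1 + sineTerm ((x : ℂ) * Complex.I / π) k)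
      = ((∏ k ∈ Finset.range N, (1 + (x / (π * (k + 1))) ^ 2) : ℝ) : ℂ) := fun N => by
    push_cast
    refine Finset.prod_congr rfl fun k _ => ?_
    simp only [sineTerm, div_pow, mul_pow, Complex.I_sq]
    field_simp
  have hlim : Complex.sin (π * ((x : ℂ) * Complex.I / π)) / (π * ((x : ℂ) * Complex.I / π))
      = ((sinhc x : ℝ) : ℂ) := by
    have hπ : (π : ℂ) ≠ 0 := Complex.ofReal_ne_zero.2 Real.pi_ne_zero
    rw [mul_div_cancel₀ _ hπ, Complex.sin_mul_I, sinhc_of_ne_zero hx, Complex.ofReal_div,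
      Complex.ofReal_sinh]
    field_simp
  have h := tendsto_euler_sin_prod' hz
  simp only [hprod, hlim] at h
  exact tendsto_ofReal_iff.1 h

theorem tendsto_prod_cosh (x : ℝ) :
    Tendsto (fun N => ∏ k ∈ Finset.range N, (1 + (2 * x / (π * (2 * k + 1))) ^ 2)) atTop
      (𝓝 (cosh x)) := by
  let P : ℕ → ℝ → ℝ := fun N y => ∏ k ∈ Finset.range N, (1 + (y / (π * (k + 1))) ^ 2)
  have hP : ∀ N y, 0 < P N y := fun N y => Finset.prod_pos fun k _ => by positivity
  -- the even-indexed factors of the product for `sinhc (2 * x)` are those for `sinhc x`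
  have hsplit : ∀ N, P (2 * N) (2 * x)
      = P N x * ∏ k ∈ Finset.range N, (1 + (2 * x / (π * (2 * k + 1))) ^ 2) := by
    intro N
    induction N with
    | zero => simp [P]
    | succ N ih =>
      rw [show 2 * (N + 1) = 2 * N + 1 + 1 by ring]
      simp only [P, Finset.prod_range_succ] at ih ⊢
      rw [ih]
      push_cast
      have : (2 * (N : ℝ) + 1 + 1) = 2 * (N + 1) := by ring
      rw [this, mul_left_comm π 2, mul_div_mul_left _ _ two_ne_zero]
      ring
  have h2N : Tendsto (fun N : ℕ => 2 * N) atTop atTop :=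
    tendsto_id.const_mul_atTop' two_pos
  have hlim := ((tendsto_prod_sinhc (2 * x)).comp h2N).div (tendsto_prod_sinhc x)
    (sinhc_pos x).ne'
  rw [sinhc_two_mul, mul_div_cancel_left₀ _ (sinhc_pos x).ne'] at hlim
  refine hlim.congr fun N => ?_
  change P (2 * N) (2 * x) / P N x = _
  rw [hsplit, mul_div_cancel_left₀ _ (hP N x).ne']

theorem isPosDefKernel_inv_cosh (a : ℝ) : IsPosDefKernel fun t => (cosh (a * t))⁻¹ := by
  refine IsPosDefKernel.of_tendsto (l := atTop)
    (F := fun N t => ∏ k ∈ Finset.range N, (1 + (2 * a / (π * (2 * k + 1)) * t) ^ 2)⁻¹)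
    (fun N => IsPosDefKernel.prod _ fun k _ => isPosDefKernel_inv_one_add_sq _) fun t => ?_
  refine ((tendsto_prod_cosh (a * t)).inv₀ (cosh_pos _).ne').congr fun N => ?_
  rw [← Finset.prod_inv_distrib]
  refine Finset.prod_congr rfl fun k _ => ?_
  ring

theorem isPosDefKernel_sinhc_div_sinhc {b c : ℝ} (hcb : c ^ 2 ≤ b ^ 2) :
    IsPosDefKernel fun t => sinhc (c * t) / sinhc (b * t) := by
  set r := c ^ 2 / b ^ 2
  have hr0 : 0 ≤ r := by positivity
  have hr1 : r ≤ 1 := div_le_one_of_le₀ hcb (sq_nonneg b)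
  have hcr : c ^ 2 = r * b ^ 2 := by
    rcases eq_or_ne b 0 with rfl | hb
    · simpa using hcb
    · exact (div_mul_cancel₀ _ (pow_ne_zero 2 hb)).symm
  refine IsPosDefKernel.of_tendsto (l := atTop)
    (F := fun N t => ∏ k ∈ Finset.range N, (r + (1 - r) * (1 + (b / (π * (k + 1)) * t) ^ 2)⁻¹))
    (fun N => IsPosDefKernel.prod _ fun k _ => (IsPosDefKernel.const hr0).add
      ((isPosDefKernel_inv_one_add_sq _).const_mul (sub_nonneg.2 hr1))) fun t => ?_
  refine ((tendsto_prod_sinhc (c * t)).div (tendsto_prod_sinhc (b * t))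
    (sinhc_pos _).ne').congr fun N => ?_
  rw [Pi.div_apply, ← Finset.prod_div_distrib]
  refine Finset.prod_congr rfl fun k _ => ?_
  have hk : π * (k + 1) ≠ 0 := by positivity
  field_simp
  linear_combination t ^ 2 * hcr

theorem Amean_exp_two_mul {γ t : ℝ} (hγ : γ ≠ 0) (ht : t ≠ 0) :
    Amean γ (exp (2 * t)) 1 = γ * (exp (2 * t) - 1) * cosh (γ * t) / (2 * sinh (γ * t)) := by
  have hexp : exp (2 * t) ≠ 1 := by simpa using ht
  have hsq : exp (2 * t * γ) = exp (γ * t) ^ 2 := by rw [sq, ← exp_add]; ring_nf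
  have hden : exp (γ * t) ^ 2 - 1 ≠ 0 := by
    rw [← hsq, sub_ne_zero, Ne, exp_eq_one_iff]
    exact mul_ne_zero (mul_ne_zero two_ne_zero ht) hγ
  have hu := (exp_pos (γ * t)).ne'
  rw [Amean, if_neg hexp, if_neg hγ, one_rpow, ← exp_mul, hsq, cosh_eq, sinh_eq, exp_neg]
  field_simp

theorem one_sub_mul_Amean_div_Amean {α β t : ℝ} (hα : α ≠ 0) (hβ : β ≠ 0) (ht : t ≠ 0) :
    1 - α / β * (Amean β (exp (2 * t)) 1 / Amean α (exp (2 * t)) 1)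
      = sinh ((β - α) * t) / (sinh (β * t) * cosh (α * t)) := by
  have hexp : exp (2 * t) - 1 ≠ 0 := sub_ne_zero.2 (by simpa using ht)
  have hsα : sinh (α * t) ≠ 0 := sinh_ne_zero.2 (mul_ne_zero hα ht)
  have hsβ : sinh (β * t) ≠ 0 := sinh_ne_zero.2 (mul_ne_zero hβ ht)
  have hcα := (cosh_pos (α * t)).ne'
  rw [Amean_exp_two_mul hβ ht, Amean_exp_two_mul hα ht, sub_mul, sinh_sub]
  field_simp

theorem statement16_general (α β : ℝ) (hα : 0 < α) (hαβ : α < β)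
    (φ : ℝ → ℝ) (hφ0 : φ 0 = (β - α) / β)
    (hφ : ∀ t : ℝ, t ≠ 0 →
      φ t = 1 - (α / β) * (Amean β (Real.exp (2 * t)) 1 / Amean α (Real.exp (2 * t)) 1)) :
    IsPosDefFun φ := by
  have hβ : 0 < β := hα.trans hαβ
  have hφ_eq : φ = fun t =>
      (β - α) / β * (sinhc ((β - α) * t) / sinhc (β * t) * (cosh (α * t))⁻¹) := by
    funext t
    rcases eq_or_ne t 0 with rfl | ht
    · simp [hφ0, sinhc_zero]
    · have hβα : β - α ≠ 0 := (sub_pos.2 hαβ).ne'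
      have hc : (β - α) * t ≠ 0 := mul_ne_zero hβα ht
      rw [hφ t ht, one_sub_mul_Amean_div_Amean hα.ne' hβ.ne' ht, sinhc_of_ne_zero hc,
        sinhc_of_ne_zero (mul_ne_zero hβ.ne' ht)]
      field_simp
  subst hφ_eq
  refine ⟨?_, ?_⟩
  · refine continuous_const.mul (.mul ?_ ?_)
    · exact (continuous_sinhc.comp (by fun_prop)).div (continuous_sinhc.comp (by fun_prop))
        fun t => (sinhc_pos _).ne'
    · exact (continuous_cosh.comp (by fun_prop)).inv₀ fun t => (cosh_pos _).ne'
  · have hsq : (β - α) ^ 2 ≤ β ^ 2 := pow_le_pow_left₀ (by linarith) (by linarith) 2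
    exact ((isPosDefKernel_sinhc_div_sinhc hsq).mul (isPosDefKernel_inv_cosh α)).const_mul
      (div_nonneg (by linarith) hβ.le)

/-- For `0 < α < β ≤ 1`, the function `t ↦ 1 - (α/β)·A_β(e^{2t},1)/A_α(e^{2t},1)`
(with value `(β-α)/β` at `t = 0`) is positive definite. -/
theorem statement16 (α β : ℝ) (hα : 0 < α) (hαβ : α < β) (hβ : β ≤ 1)
    (φ : ℝ → ℝ) (hφ0 : φ 0 = (β - α) / β)
    (hφ : ∀ t : ℝ, t ≠ 0 →
      φ t = 1 - (α / β) * (Amean β (Real.exp (2 * t)) 1 / Amean α (Real.exp (2 * t)) 1)) :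
    IsPosDefFun φ :=
  statement16_general α β hα hαβ φ hφ0 hφ
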